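/- arXiv:1607.05394 — 5 statements merged into one kernel-verified Lean document; each statement's English description precedes it below -/
import Mathlib

section
/- Let f = x^3 + p x^2 + q x + r be a separable monic cubic polynomial over a field K, with roots α, β, γ in a splitting field, and let δ = (β−α)(α−γ)(γ−β). If (2p^2 − 6q)α + (pq − 9r + δ) ≠ 0 then β = (−(pq − 9r − δ)α + (6pr − 2q^2)) / ((2p^2 − 6q)α + (pq − 9r + δ)). -/
/-!
By Vieta's formulas `p`, `q`, `r` are, up to sign, the elementary symmetric functions of
`α`, `β`, `γ`; after substituting them, `β` times the denominator equals the numerator as a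
polynomial identity in the three roots. Vieta's formulas follow from the hypothesis because the
difference of the two sides is a quadratic function vanishing everywhere, and a quadratic with
three distinct roots is zero.
-/

section Vieta

variable {R : Type*} [CommRing R] [NoZeroDivisors R]

theorem quadratic_coeffs_eq_zero_of_three_roots {a b c x y z : R}
    (hxy : x ≠ y) (hyz : y ≠ z) (hxz : x ≠ z)
    (hx : a * x ^ 2 + b * x + c = 0) (hy : a * y ^ 2 + b * y + c = 0)
    (hz : a * z ^ 2 + b * z + c = 0) :
    a = 0 ∧ b = 0 ∧ c = 0 := by
  have slope {s t : R} (hst : s ≠ t) (hs : a * s ^ 2 + b * s + c = 0)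
      (ht : a * t ^ 2 + b * t + c = 0) : a * (s + t) + b = 0 := by
    have : (s - t) * (a * (s + t) + b) = 0 := by linear_combination hs - ht
    exact (mul_eq_zero.mp this).resolve_left (sub_ne_zero.mpr hst)
  have ha : a = 0 := by
    have : a * (x - z) = 0 := by linear_combination slope hxy hx hy - slope hyz hy hz
    exact (mul_eq_zero.mp this).resolve_right (sub_ne_zero.mpr hxz)
  have hb : b = 0 := by linear_combination slope hxy hx hy - (x + y) * ha
  exact ⟨ha, hb, by linear_combination hx - x ^ 2 * ha - x * hb⟩

theorem vieta_cubic_of_forall_eq {p q r α β γ : R}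
    (hαβ : α ≠ β) (hβγ : β ≠ γ) (hαγ : α ≠ γ)
    (hf : ∀ x : R, x ^ 3 + p * x ^ 2 + q * x + r = (x - α) * (x - β) * (x - γ)) :
    p = -(α + β + γ) ∧ q = α * β + β * γ + γ * α ∧ r = -(α * β * γ) := by
  have hquad (x : R) : (p + (α + β + γ)) * x ^ 2 + (q - (α * β + β * γ + γ * α)) * x
      + (r + α * β * γ) = 0 := by
    linear_combination hf x
  obtain ⟨hp, hq, hr⟩ :=
    quadratic_coeffs_eq_zero_of_three_roots hαβ hβγ hαγ (hquad α) (hquad β) (hquad γ)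
  exact ⟨by linear_combination hp, by linear_combination hq, by linear_combination hr⟩

end Vieta

/-- Lemma on roots of a separable monic cubic: β as a Möbius transformation of α.
K is a field, the roots α, β, γ live in a splitting field L of f over K. -/
theorem cubic_root_beta_moebius
    (K L : Type*) [Field K] [Field L] [Algebra K L]
    (p q r : K) (α β γ : L)
    (hf : ∀ x : L, x ^ 3 + algebraMap K L p * x ^ 2 + algebraMap K L q * x
        + algebraMap K L r = (x - α) * (x - β) * (x - γ))
    (hαβ : α ≠ β) (hβγ : β ≠ γ) (hαγ : α ≠ γ)
    (δ : L) (hδ : δ = (β - α) * (α - γ) * (γ - β))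
    (P Q R : L) (hP : P = algebraMap K L p) (hQ : Q = algebraMap K L q)
    (hR : R = algebraMap K L r)
    (hden : (2 * P ^ 2 - 6 * Q) * α + (P * Q - 9 * R + δ) ≠ 0) :
    β = (-(P * Q - 9 * R - δ) * α + (6 * P * R - 2 * Q ^ 2))
        / ((2 * P ^ 2 - 6 * Q) * α + (P * Q - 9 * R + δ)) := by
  subst hP hQ hR
  obtain ⟨hp, hq, hr⟩ := vieta_cubic_of_forall_eq hαβ hβγ hαγ hf
  rw [eq_div_iff hden, hp, hq, hr, hδ]
  ring
end

section
/- Let f = x^3 + p x^2 + q x + r be a separable monic cubic polynomial over a field K with roots α, β, γ and δ = (β−α)(α−γ)(γ−β). If (2p^2 − 6q)α + (pq − 9r − δ) ≠ 0 then γ = (−(pq − 9r + δ)α + (6pr − 2q^2)) / ((2p^2 − 6q)α + (pq − 9r − δ)). -/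
/-! Subtracting the identity at two distinct roots and cancelling their difference yields
Vieta's formulas for `p, q, r` in terms of `α, β, γ`; once they are substituted and the
denominator is cleared, the claim becomes a polynomial identity in `α, β, γ`. -/

theorem cubic_vieta_of_forall_eq {L : Type*} [CommRing L] [IsDomain L] {a b c α β γ : L}
    (h : ∀ x : L, x ^ 3 + a * x ^ 2 + b * x + c = (x - α) * (x - β) * (x - γ))
    (hαβ : α ≠ β) (hβγ : β ≠ γ) (hαγ : α ≠ γ) :
    a = -(α + β + γ) ∧ b = α * β + β * γ + γ * α ∧ c = -(α * β * γ) := by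
  have hαβ' : α ^ 2 + α * β + β ^ 2 + a * (α + β) + b = 0 := by
    apply mul_left_cancel₀ (sub_ne_zero.mpr hαβ)
    linear_combination h α - h β
  have hβγ' : β ^ 2 + β * γ + γ ^ 2 + a * (β + γ) + b = 0 := by
    apply mul_left_cancel₀ (sub_ne_zero.mpr hβγ)
    linear_combination h β - h γ
  have ha : a = -(α + β + γ) := by
    apply mul_left_cancel₀ (sub_ne_zero.mpr hαγ)
    linear_combination hαβ' - hβγ'
  have hb : b = α * β + β * γ + γ * α := by
    linear_combination hαβ' - (α + β) * ha
  exact ⟨ha, hb, by linear_combination h α - α ^ 2 * ha - α * hb⟩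

theorem cubic_root_mul_moebius_denom {L : Type*} [CommRing L] (α β γ : L) :
    let P := -(α + β + γ)
    let Q := α * β + β * γ + γ * α
    let R := -(α * β * γ)
    let δ := (β - α) * (α - γ) * (γ - β)
    γ * ((2 * P ^ 2 - 6 * Q) * α + (P * Q - 9 * R - δ))
      = -(P * Q - 9 * R + δ) * α + (6 * P * R - 2 * Q ^ 2) := by
  intros
  ring

/-- Lemma on roots of a separable monic cubic: γ as a Möbius transformation of α.
K is a field, the roots α, β, γ live in a splitting field L of f over K. -/
theorem cubic_root_gamma_moebius
    (K L : Type*) [Field K] [Field L] [Algebra K L]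
    (p q r : K) (α β γ : L)
    (hf : ∀ x : L, x ^ 3 + algebraMap K L p * x ^ 2 + algebraMap K L q * x
        + algebraMap K L r = (x - α) * (x - β) * (x - γ))
    (hαβ : α ≠ β) (hβγ : β ≠ γ) (hαγ : α ≠ γ)
    (δ : L) (hδ : δ = (β - α) * (α - γ) * (γ - β))
    (P Q R : L) (hP : P = algebraMap K L p) (hQ : Q = algebraMap K L q)
    (hR : R = algebraMap K L r)
    (hden : (2 * P ^ 2 - 6 * Q) * α + (P * Q - 9 * R - δ) ≠ 0) :
    γ = (-(P * Q - 9 * R + δ) * α + (6 * P * R - 2 * Q ^ 2))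
        / ((2 * P ^ 2 - 6 * Q) * α + (P * Q - 9 * R - δ)) := by
  subst hP hQ hR
  obtain ⟨hp, hq, hr⟩ := cubic_vieta_of_forall_eq hf hαβ hβγ hαγ
  rw [eq_div_iff hden, hδ, hp, hq, hr]
  exact cubic_root_mul_moebius_denom α β γ
end

section
/- For any field K of characteristic not 2 or 3 and element d ∈ K with d(d−1)(d^2−d+1) ≠ 0, if ξ0, ξ1, ξ2 are the three roots of 4x^3 + (d^4 − 6d^3 + 3d^2 + 2d + 1)x^2 + 2d^2(d−1)(d^2−d−1)x + d^4(d−1)^2 in an algebraic closure, and t = (4/(d^4(d−1)^4)) (ξ1 − ξ0)(ξ0 − ξ2)(ξ2 − ξ1), then t^2 = (d^3 − 8d^2 + 5d + 1)/(d(d−1)). -/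
/-! The cubic is the 2-torsion polynomial of the Tate normal form `E(b, c)` with `b = d³ - d²`,
`c = d² - d`, the universal elliptic curve with a point of order 7. For a cubic with leading
coefficient `4` the discriminant is `4⁴` times the squared product of root differences, and for a
2-torsion polynomial it is `16 Δ`; hence `t² = Δ / (d(d - 1))⁸`, while
`Δ = (d(d - 1))⁷ (d³ - 8d² + 5d + 1)`. -/

namespace Cubic

variable {R : Type*} [CommRing R] [NoZeroDivisors R]

theorem coeffs_eq_three_roots_of_forall_eq (h2 : (2 : R) ≠ 0) {P : Cubic R} {x y z : R}
    (h : ∀ X, P.a * X ^ 3 + P.b * X ^ 2 + P.c * X + P.d = P.a * (X - x) * (X - y) * (X - z)) :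
    P.b = -P.a * (x + y + z) ∧ P.c = P.a * (x * y + x * z + y * z) ∧
      P.d = -P.a * (x * y * z) := by
  have h0 := h 0
  have h1 := h 1
  have hm1 := h (-1)
  refine ⟨mul_left_cancel₀ h2 ?_, mul_left_cancel₀ h2 ?_, by linear_combination h0⟩
  · linear_combination h1 + hm1 - 2 * h0
  · linear_combination h1 - hm1

theorem discr_eq_of_forall_eq (h2 : (2 : R) ≠ 0) {P : Cubic R} {x y z : R}
    (h : ∀ X, P.a * X ^ 3 + P.b * X ^ 2 + P.c * X + P.d = P.a * (X - x) * (X - y) * (X - z)) :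
    P.discr = (P.a * P.a * (x - y) * (x - z) * (y - z)) ^ 2 := by
  obtain ⟨hb, hc, hd⟩ := coeffs_eq_three_roots_of_forall_eq h2 h
  rw [discr, hb, hc, hd]
  ring

end Cubic

namespace WeierstrassCurve

variable {R : Type*} [CommRing R]

/-- The Tate normal form `y² + (1 - c)xy - by = x³ - bx²`. -/
def tateNormalForm (b c : R) : WeierstrassCurve R :=
  ⟨1 - c, -b, -b, 0, 0⟩

theorem tateNormalForm_twoTorsionPolynomial (b c : R) :
    (tateNormalForm b c).twoTorsionPolynomial =
      ⟨4, (1 - c) ^ 2 - 4 * b, 2 * ((c - 1) * b), b ^ 2⟩ := by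
  simp only [twoTorsionPolynomial, tateNormalForm, b₂, b₄, b₆, Cubic.mk.injEq, true_and]
  refine ⟨?_, ?_, ?_⟩ <;> ring

theorem tateNormalForm_Δ (b c : R) :
    (tateNormalForm b c).Δ =
      b ^ 3 * (16 * b ^ 2 - 8 * b * c ^ 2 - 20 * b * c + b + c * (c - 1) ^ 3) := by
  simp only [Δ, tateNormalForm, b₂, b₄, b₆, b₈]
  ring

theorem tateNormalForm_seven_Δ (d : R) :
    (tateNormalForm (d ^ 2 * (d - 1)) (d * (d - 1))).Δ =
      (d * (d - 1)) ^ 7 * (d ^ 3 - 8 * d ^ 2 + 5 * d + 1) := by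
  rw [tateNormalForm_Δ]
  ring

end WeierstrassCurve

theorem two_division_poly_discriminant_identity_general
    (L : Type*) [Field L] (h2 : (2 : L) ≠ 0)
    (d : L) (hd : d * (d - 1) * (d ^ 2 - d + 1) ≠ 0)
    (ξ0 ξ1 ξ2 : L)
    (hroots : ∀ x : L,
      4 * x ^ 3 + (d ^ 4 - 6 * d ^ 3 + 3 * d ^ 2 + 2 * d + 1) * x ^ 2
        + 2 * d ^ 2 * (d - 1) * (d ^ 2 - d - 1) * x + d ^ 4 * (d - 1) ^ 2
      = 4 * (x - ξ0) * (x - ξ1) * (x - ξ2))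
    (t : L)
    (ht : t = 4 / (d ^ 4 * (d - 1) ^ 4) * ((ξ1 - ξ0) * (ξ0 - ξ2) * (ξ2 - ξ1))) :
    t ^ 2 = (d ^ 3 - 8 * d ^ 2 + 5 * d + 1) / (d * (d - 1)) := by
  have hW :
      (WeierstrassCurve.tateNormalForm (d ^ 2 * (d - 1)) (d * (d - 1))).twoTorsionPolynomial =
      ⟨4, d ^ 4 - 6 * d ^ 3 + 3 * d ^ 2 + 2 * d + 1, 2 * d ^ 2 * (d - 1) * (d ^ 2 - d - 1),
        d ^ 4 * (d - 1) ^ 2⟩ := by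
    rw [WeierstrassCurve.tateNormalForm_twoTorsionPolynomial, Cubic.mk.injEq]
    refine ⟨rfl, ?_, ?_, ?_⟩ <;> ring
  have hdiscr := WeierstrassCurve.twoTorsionPolynomial_discr
    (WeierstrassCurve.tateNormalForm (d ^ 2 * (d - 1)) (d * (d - 1)))
  rw [hW, Cubic.discr_eq_of_forall_eq h2 hroots,
    WeierstrassCurve.tateNormalForm_seven_Δ] at hdiscr
  have hd0 : d ≠ 0 := left_ne_zero_of_mul (left_ne_zero_of_mul hd)
  have hd1 : d - 1 ≠ 0 := right_ne_zero_of_mul (left_ne_zero_of_mul hd)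
  rw [ht]
  field_simp
  have h16 : (16 : L) ≠ 0 := by
    simpa only [show (16 : L) = 2 ^ 4 by norm_num] using pow_ne_zero 4 h2
  exact mul_left_cancel₀ h16 (by linear_combination hdiscr)

/-- Identity t² = (d³ − 8d² + 5d + 1)/(d(d−1)) for the product of differences of
the roots of the 2-division polynomial over a field of characteristic ≠ 2, 3. -/
theorem two_division_poly_discriminant_identity
    (L : Type*) [Field L] (h2 : (2 : L) ≠ 0) (h3 : (3 : L) ≠ 0)
    (d : L) (hd : d * (d - 1) * (d ^ 2 - d + 1) ≠ 0)
    (ξ0 ξ1 ξ2 : L)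
    (hroots : ∀ x : L,
      4 * x ^ 3 + (d ^ 4 - 6 * d ^ 3 + 3 * d ^ 2 + 2 * d + 1) * x ^ 2
        + 2 * d ^ 2 * (d - 1) * (d ^ 2 - d - 1) * x + d ^ 4 * (d - 1) ^ 2
      = 4 * (x - ξ0) * (x - ξ1) * (x - ξ2))
    (t : L)
    (ht : t = 4 / (d ^ 4 * (d - 1) ^ 4) * ((ξ1 - ξ0) * (ξ0 - ξ2) * (ξ2 - ξ1))) :
    t ^ 2 = (d ^ 3 - 8 * d ^ 2 + 5 * d + 1) / (d * (d - 1)) :=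
  two_division_poly_discriminant_identity_general L h2 d hd ξ0 ξ1 ξ2 hroots t ht
end

section
/- Over ℚ(t), if δ0, δ1, δ2 are the roots of δ^3 − (t^2+8)δ^2 + (t^2+5)δ + 1 = 0 in a splitting field, then δ1 = (δ0 − 1)/δ0 and δ2 = 1/(1 − δ0) after suitable ordering; equivalently, the polynomial δ^3 − (t^2+8)δ^2 + (t^2+5)δ + 1 has the property that if δ is a root then (δ−1)/δ is also a root. -/
/-!
The cubic is the member `a = t² + 8` of the family `p_a(x) = x³ - a x² + (a - 3) x + 1`, and for every
`a` one has `x³ · p_a((x - 1)/x) = -p_a(x)`. A root of `p_a` is nonzero (the constant term is `1`),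
so the order-three Möbius map `x ↦ (x - 1)/x` sends roots to roots.
-/

section CubicFamily

variable {K : Type*} [Field K]

theorem ne_zero_of_cubic_eq_zero {a b x : K} (h : x ^ 3 - a * x ^ 2 + b * x + 1 = 0) : x ≠ 0 := by
  rintro rfl
  norm_num at h

theorem cubic_eval_sub_one_div {a x : K} (hx : x ≠ 0) :
    ((x - 1) / x) ^ 3 - a * ((x - 1) / x) ^ 2 + (a - 3) * ((x - 1) / x) + 1
      = -(x ^ 3 - a * x ^ 2 + (a - 3) * x + 1) / x ^ 3 := by
  field_simp
  ring

theorem cubic_eq_zero_sub_one_div {a x : K} (h : x ^ 3 - a * x ^ 2 + (a - 3) * x + 1 = 0) :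
    ((x - 1) / x) ^ 3 - a * ((x - 1) / x) ^ 2 + (a - 3) * ((x - 1) / x) + 1 = 0 := by
  rw [cubic_eval_sub_one_div (ne_zero_of_cubic_eq_zero h), h, neg_zero, zero_div]

end CubicFamily

theorem diamond_permutes_roots_of_delta_cubic_general
    (L : Type*) [Field L] (δ : L)
    (t : L)
    (hroot : δ ^ 3 - (t ^ 2 + 8) * δ ^ 2 + (t ^ 2 + 5) * δ + 1 = 0) :
    ((δ - 1) / δ) ^ 3 - (t ^ 2 + 8) * ((δ - 1) / δ) ^ 2
      + (t ^ 2 + 5) * ((δ - 1) / δ) + 1 = 0 := by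
  have hroot' : δ ^ 3 - (t ^ 2 + 8) * δ ^ 2 + (t ^ 2 + 8 - 3) * δ + 1 = 0 := by
    linear_combination hroot
  linear_combination cubic_eq_zero_sub_one_div hroot'

/-- Over ℚ(t), the map δ ↦ (δ−1)/δ permutes the roots of
δ³ − (t²+8)δ² + (t²+5)δ + 1: if δ is a root (in any field extension of ℚ(t))
then so is (δ−1)/δ. -/
theorem diamond_permutes_roots_of_delta_cubic
    (L : Type*) [Field L] [Algebra (RatFunc ℚ) L] (δ : L)
    (t : L) (ht : t = algebraMap (RatFunc ℚ) L RatFunc.X)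
    (hroot : δ ^ 3 - (t ^ 2 + 8) * δ ^ 2 + (t ^ 2 + 5) * δ + 1 = 0) :
    ((δ - 1) / δ) ^ 3 - (t ^ 2 + 8) * ((δ - 1) / δ) ^ 2
      + (t ^ 2 + 5) * ((δ - 1) / δ) + 1 = 0 :=
  diamond_permutes_roots_of_delta_cubic_general L δ t hroot
end

section
/- Over ℚ(t), if ζ0, ζ1, ζ2 are the roots of 4ζ^3 + (t^4 + 9t^2 + 17)ζ^2 + (4t^2 + 20)ζ + 4, then 4(ζ0−ζ1)(ζ0−ζ2)(ζ1−ζ2) = ± t(t^2 − t + 7)(t^2 + t + 7); equivalently, the discriminant of the monic polynomial ζ^3 + (1/4)(t^4 + 9t^2 + 17)ζ^2 + (t^2 + 5)ζ + 1 equals t^2(t^2 − t + 7)^2(t^2 + t + 7)^2/16. -/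
/-!
Over an infinite domain a cubic is determined by its values, so the pointwise factorisation
pins down its coefficients by Vieta's formulas and its discriminant is the squared product of
root differences. What remains is a polynomial identity in `t`.
-/

open Polynomial

namespace Cubic

theorem discr_eq_of_forall_eval_eq {R : Type*} [CommRing R] [IsDomain R] [Infinite R]
    (P : Cubic R) {x y z : R}
    (h : ∀ w, P.toPoly.eval w = P.a * ((w - x) * (w - y) * (w - z))) :
    P.discr = (P.a * P.a * (x - y) * (x - z) * (y - z)) ^ 2 := by
  have hP : P = ⟨P.a, P.a * -(x + y + z), P.a * (x * y + x * z + y * z), P.a * -(x * y * z)⟩ :=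
    (toPoly_injective _ _).mp <| by
      rw [← C_mul_prod_X_sub_C_eq]
      exact funext fun w ↦ by
        simpa only [mul_assoc, eval_mul, eval_C, eval_sub, eval_X] using h w
  rw [hP, discr]
  ring

end Cubic

section ZetaCubic

variable {K : Type*} [Field K]

def zetaCubic (t : K) : Cubic K :=
  ⟨1, 1 / 4 * (t ^ 4 + 9 * t ^ 2 + 17), t ^ 2 + 5, 1⟩

theorem discr_zetaCubic (h2 : (2 : K) ≠ 0) (t : K) :
    (zetaCubic t).discr = t ^ 2 * (t ^ 2 - t + 7) ^ 2 * (t ^ 2 + t + 7) ^ 2 / 16 := by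
  have h4 : (4 : K) ≠ 0 := by simpa [show (4 : K) = 2 * 2 by norm_num] using h2
  have h16 : (16 : K) ≠ 0 := by simpa [show (16 : K) = 4 * 4 by norm_num] using h4
  rw [zetaCubic, Cubic.discr]
  field_simp
  ring

end ZetaCubic

theorem zeta_cubic_discriminant_general
    (L : Type*) [Field L] [Algebra (RatFunc ℚ) L]
    (t : L)
    (ζ0 ζ1 ζ2 : L)
    (hroots : ∀ x : L,
      x ^ 3 + 1 / 4 * (t ^ 4 + 9 * t ^ 2 + 17) * x ^ 2 + (t ^ 2 + 5) * x + 1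
        = (x - ζ0) * (x - ζ1) * (x - ζ2)) :
    ((ζ0 - ζ1) * (ζ0 - ζ2) * (ζ1 - ζ2)) ^ 2
      = t ^ 2 * (t ^ 2 - t + 7) ^ 2 * (t ^ 2 + t + 7) ^ 2 / 16 := by
  have : CharZero L := charZero_of_injective_algebraMap (algebraMap (RatFunc ℚ) L).injective
  have hdiscr := (zetaCubic t).discr_eq_of_forall_eval_eq fun w ↦ by
    simpa [zetaCubic, Cubic.toPoly] using hroots w
  rw [discr_zetaCubic two_ne_zero] at hdiscr
  simpa [zetaCubic] using hdiscr.symm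

/-- Discriminant identity for the cubic ζ³ + (1/4)(t⁴+9t²+17)ζ² + (t²+5)ζ + 1
over ℚ(t): with roots ζ0, ζ1, ζ2 in a field extension one has
(4(ζ0−ζ1)(ζ0−ζ2)(ζ1−ζ2))² = (t(t²−t+7)(t²+t+7))², i.e. the discriminant of the
monic cubic equals t²(t²−t+7)²(t²+t+7)²/16. -/
theorem zeta_cubic_discriminant
    (L : Type*) [Field L] [Algebra (RatFunc ℚ) L]
    (t : L) (ht : t = algebraMap (RatFunc ℚ) L RatFunc.X)
    (ζ0 ζ1 ζ2 : L)
    (hroots : ∀ x : L,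
      x ^ 3 + 1 / 4 * (t ^ 4 + 9 * t ^ 2 + 17) * x ^ 2 + (t ^ 2 + 5) * x + 1
        = (x - ζ0) * (x - ζ1) * (x - ζ2)) :
    ((ζ0 - ζ1) * (ζ0 - ζ2) * (ζ1 - ζ2)) ^ 2
      = t ^ 2 * (t ^ 2 - t + 7) ^ 2 * (t ^ 2 + t + 7) ^ 2 / 16 :=
  zeta_cubic_discriminant_general L t ζ0 ζ1 ζ2 hroots
end
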